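/- Any two elements of the Young–Fibonacci poset have a least upper bound; explicitly, for u, v with #u ≥ #v, the join is obtained from u by replacing the first max(#v' − d(u'), 0) ones by twos, where u = u'w, v = v'w with w the longest common suffix. -/

import Mathlib

inductive YFDigit : Type
  | one : YFDigit
  | two : YFDigit
  deriving DecidableEq, Repr

abbrev YFWord := List YFDigit

namespace YFWord

/-- value of a digit -/
def digitVal : YFDigit → ℕ
  | .one => 1
  | .two => 2

/-- digit sum of a word -/
def dsum (v : YFWord) : ℕ := (v.map digitVal).sum

/-- number of 2's in a word -/
def twos (v : YFWord) : ℕ := v.count YFDigit.two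

/-- longest common prefix of two lists -/
def commonPrefix : YFWord → YFWord → YFWord
  | a :: x, b :: y => if a = b then a :: commonPrefix x y else []
  | _, _ => []

/-- longest common suffix -/
def lcs (x y : YFWord) : YFWord := (commonPrefix x.reverse y.reverse).reverse

/-- the prefix of `x` remaining after deleting the longest common suffix of `x` and `y` -/
def rem (x y : YFWord) : YFWord := x.take (x.length - (lcs x y).length)

/-- the Young–Fibonacci order: x ≤ y iff, after removing the longest common suffix,
the remaining prefix of `y` has at least as many 2's as the remaining prefix of `x` has digits -/
def yfLE (x y : YFWord) : Prop := (rem x y).length ≤ twos (rem y x)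

/-- strict Young–Fibonacci order -/
def yfLT (x y : YFWord) : Prop := yfLE x y ∧ ¬ yfLE y x

/-- `y` covers `x` in the Young–Fibonacci order -/
def covers (x y : YFWord) : Prop := yfLT x y ∧ ∀ z, ¬ (yfLT x z ∧ yfLT z y)

end YFWord

open YFWord

namespace YFWord

/-- replace the first `k` ones of a word by twos -/
def repl : ℕ → YFWord → YFWord
  | 0, l => l
  | _ + 1, [] => []
  | k + 1, YFDigit.two :: l => YFDigit.two :: repl (k + 1) l
  | k + 1, YFDigit.one :: l => YFDigit.two :: repl k l

/-- the word `o(u,v)`: assuming WLOG `#u ≥ #v`, obtained from `u` by replacing its first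
`max(#v' − d(u'), 0)` ones by twos, where `u = u'w`, `v = v'w`, `w` the longest common suffix -/
def joinWord (u v : YFWord) : YFWord :=
  if v.length ≤ u.length then repl ((rem v u).length - twos (rem u v)) u
  else repl ((rem u v).length - twos (rem v u)) v

end YFWord

/-!
Write `cost x t = #x - #t + d(t)` for a suffix `t` of `x`. Then `x ≤ y` iff `cost x t ≤ d(y)` for
some common suffix `t` of `x` and `y`: `cost x` decreases as `t` grows, so the longest common suffix
is the best choice.

Let `u = a w`, `v = b w` with `#b ≤ #a`, and split `a = c r` so that `c` holds the first
`#b - d(a)` ones of `a`. Turning them into twos gives `j = 2^{#c} r w` with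
`d(j) = max(#b, d(a)) + d(w)`, which is `cost u (r w)` and at least `cost v w = #b + d(w)`, so `j`
bounds `u` and `v`. Let `y` bound `u` and `v`. If the longest common suffix `s` of `u` and `y` lies
in `r w`, then `cost j s = cost u s ≤ d(y)`. Otherwise `y` ends in `r w`; its common suffix with `v`
is comparable with `s`, hence lies in `w`, so `cost v w ≤ d(y)`, and with `d(u) ≤ d(y)` this bounds
`d(j) = cost j (r w)`.
-/

open List

namespace YFWord

section CommonSuffix

theorem commonPrefix_comm : ∀ x y : YFWord, commonPrefix x y = commonPrefix y x
  | a :: x, b :: y => by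
    by_cases h : a = b
    · subst h; simp [commonPrefix, commonPrefix_comm x y]
    · simp [commonPrefix, h, Ne.symm h]
  | [], [] | [], _ :: _ | _ :: _, [] => rfl

theorem commonPrefix_prefix_left : ∀ x y : YFWord, commonPrefix x y <+: x
  | a :: x, b :: y => by
    by_cases h : a = b
    · subst h; simpa [commonPrefix] using commonPrefix_prefix_left x y
    · simp [commonPrefix, h]
  | [], _ | _ :: _, [] => by simp [commonPrefix]

theorem prefix_commonPrefix : ∀ {p x y : YFWord}, p <+: x → p <+: y → p <+: commonPrefix x y
  | [], _, _, _, _ => nil_prefix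
  | _ :: p, _ :: x, _ :: y, hx, hy => by
    obtain ⟨rfl, hpx⟩ := cons_prefix_cons.mp hx
    obtain ⟨rfl, hpy⟩ := cons_prefix_cons.mp hy
    simpa [commonPrefix] using prefix_commonPrefix hpx hpy
  | _ :: _, [], _, hx, _ => by simp at hx
  | _ :: _, _ :: _, [], _, hy => by simp at hy

theorem lcs_comm (x y : YFWord) : lcs x y = lcs y x := by
  simp [lcs, commonPrefix_comm]

theorem lcs_suffix_left (x y : YFWord) : lcs x y <:+ x := by
  simpa [lcs, ← reverse_prefix] using commonPrefix_prefix_left x.reverse y.reverse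

theorem lcs_suffix_right (x y : YFWord) : lcs x y <:+ y :=
  lcs_comm x y ▸ lcs_suffix_left y x

theorem suffix_lcs {t x y : YFWord} (hx : t <:+ x) (hy : t <:+ y) : t <:+ lcs x y := by
  rw [← reverse_prefix] at hx hy ⊢
  simpa [lcs] using prefix_commonPrefix hx hy

theorem suffix_lcs_or_suffix_lcs {s t u v y : YFWord} (hsu : s <:+ u) (hsy : s <:+ y)
    (htv : t <:+ v) (hty : t <:+ y) : s <:+ lcs u v ∨ t <:+ lcs u v := by
  rcases suffix_or_suffix_of_suffix hsy hty with hst | hts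
  · exact .inl (suffix_lcs hsu (hst.trans htv))
  · exact .inr (suffix_lcs (hts.trans hsu) htv)

theorem rem_append_lcs (x y : YFWord) : rem x y ++ lcs x y = x := by
  rw [rem]
  obtain ⟨p, hp⟩ := lcs_suffix_left x y
  generalize lcs x y = L at hp ⊢
  subst hp
  simp

end CommonSuffix

section Cost

@[simp]
theorem twos_append (x y : YFWord) : twos (x ++ y) = twos x + twos y := count_append ..

theorem count_one_add_twos : ∀ l : YFWord, l.count .one + twos l = l.length
  | [] => rfl
  | d :: l => by
    have := count_one_add_twos l
    cases d <;> simp [twos] at * <;> omega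

theorem twos_le_length (l : YFWord) : twos l ≤ l.length := count_le_length

def cost (x t : YFWord) : ℕ := x.length - t.length + twos t

theorem cost_antitone {x t w : YFWord} (htw : t <:+ w) (hwx : w <:+ x) : cost x w ≤ cost x t := by
  obtain ⟨p, rfl⟩ := hwx
  obtain ⟨m, rfl⟩ := htw
  have := twos_le_length m
  simp only [cost, twos_append, length_append] at *
  omega

theorem twos_le_cost {x t : YFWord} (htx : t <:+ x) : twos x ≤ cost x t := by
  simpa [cost] using cost_antitone htx (suffix_refl x)

theorem yfLE_iff_cost_lcs_le {x y : YFWord} : yfLE x y ↔ cost x (lcs x y) ≤ twos y := by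
  have hx := congrArg length (rem_append_lcs x y)
  have hy := congrArg twos (rem_append_lcs y x)
  rw [length_append] at hx
  rw [twos_append, lcs_comm y x] at hy
  rw [yfLE, cost]
  omega

theorem yfLE_of_cost_le {x y t : YFWord} (htx : t <:+ x) (hty : t <:+ y)
    (h : cost x t ≤ twos y) : yfLE x y :=
  yfLE_iff_cost_lcs_le.mpr <| (cost_antitone (suffix_lcs htx hty) (lcs_suffix_left x y)).trans h

theorem twos_le_of_yfLE {x y : YFWord} (h : yfLE x y) : twos x ≤ twos y :=
  (twos_le_cost (lcs_suffix_left x y)).trans (yfLE_iff_cost_lcs_le.mp h)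

end Cost

section Repl

theorem repl_append : ∀ {k : ℕ} {c : YFWord} (z : YFWord), k ≤ c.count .one →
    repl k (c ++ z) = repl k c ++ z
  | 0, _, _, _ => by simp [repl]
  | _ + 1, [], _, h => by simp at h
  | k + 1, .two :: c, z, h => by
    simpa [repl] using repl_append (k := k + 1) z (by simpa using h)
  | k + 1, .one :: c, z, h => by
    simpa [repl] using repl_append (k := k) z (by simpa using h)

theorem exists_repl_eq_replicate_append : ∀ {k : ℕ} {l : YFWord}, k ≤ l.count .one →
    ∃ c r : YFWord, l = c ++ r ∧ c.count .one = k ∧ repl k l = replicate c.length .two ++ r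
  | 0, l, _ => ⟨[], l, by simp [repl]⟩
  | _ + 1, [], h => by simp at h
  | k + 1, .two :: l, h => by
    obtain ⟨c, r, rfl, hc, he⟩ := exists_repl_eq_replicate_append (k := k + 1) (by simpa using h)
    exact ⟨.two :: c, r, rfl, by simpa using hc, by simp [repl, he, replicate_succ]⟩
  | k + 1, .one :: l, h => by
    obtain ⟨c, r, rfl, hc, he⟩ := exists_repl_eq_replicate_append (k := k) (by simpa using h)
    exact ⟨.one :: c, r, rfl, by simpa using hc, by simp [repl, he, replicate_succ]⟩

end Repl

def IsJoin (u v j : YFWord) : Prop :=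
  yfLE u j ∧ yfLE v j ∧ ∀ y, yfLE u y → yfLE v y → yfLE j y

theorem IsJoin.symm {u v j : YFWord} (h : IsJoin u v j) : IsJoin v u j :=
  ⟨h.2.1, h.1, fun y hu hv => h.2.2 y hv hu⟩

theorem isJoin_replicate_two {b c r w : YFWord} (hw : lcs (c ++ r ++ w) (b ++ w) = w)
    (hcr : c.length + twos r = max b.length (twos (c ++ r))) :
    IsJoin (c ++ r ++ w) (b ++ w) (replicate c.length .two ++ r ++ w) := by
  have hcost_j : ∀ t, cost (replicate c.length .two ++ r ++ w) t = cost (c ++ r ++ w) t := by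
    simp [cost]
  have hrw_u : r ++ w <:+ c ++ r ++ w := ⟨c, (append_assoc ..).symm⟩
  have hrw_j : r ++ w <:+ replicate c.length .two ++ r ++ w := ⟨_, (append_assoc ..).symm⟩
  have hw_j : w <:+ replicate c.length .two ++ r ++ w := suffix_append ..
  have hcost_rw : cost (c ++ r ++ w) (r ++ w) = c.length + twos r + twos w := by
    simp only [cost, length_append, twos_append]
    omega
  have htwos_j : twos (replicate c.length .two ++ r ++ w) = c.length + twos r + twos w := by
    simp [twos, add_assoc]
  have hcost_w : cost (b ++ w) w = b.length + twos w := by simp [cost]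
  simp only [twos_append] at hcr
  refine ⟨yfLE_of_cost_le hrw_u hrw_j (by omega),
    yfLE_of_cost_le (suffix_append b w) hw_j (by omega), fun y huy hvy => ?_⟩
  have hs := yfLE_iff_cost_lcs_le.mp huy
  rcases le_or_gt (lcs (c ++ r ++ w) y).length (r ++ w).length with hshort | hlong
  · have hs_rw := suffix_of_suffix_length_le (lcs_suffix_left _ y) hrw_u hshort
    exact yfLE_of_cost_le (hs_rw.trans hrw_j) (lcs_suffix_right _ y) (hcost_j _ ▸ hs)
  · have hrw_s := suffix_of_suffix_length_le hrw_u (lcs_suffix_left _ y) hlong.le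
    have ht_w : lcs (b ++ w) y <:+ w := by
      have h := suffix_lcs_or_suffix_lcs (lcs_suffix_left (c ++ r ++ w) y) (lcs_suffix_right _ y)
        (lcs_suffix_left (b ++ w) y) (lcs_suffix_right _ y)
      rw [hw] at h
      refine h.resolve_left fun hs_w => ?_
      have := hs_w.length_le
      simp only [length_append] at hlong
      omega
    have hv_y := (cost_antitone ht_w (suffix_append b w)).trans (yfLE_iff_cost_lcs_le.mp hvy)
    have hu_y := twos_le_of_yfLE huy
    simp only [twos_append] at hu_y
    exact yfLE_of_cost_le hrw_j (hrw_s.trans (lcs_suffix_right _ y)) (by rw [hcost_j]; omega)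

theorem isJoin_repl {u v : YFWord} (hvu : v.length ≤ u.length) :
    IsJoin u v (repl ((rem v u).length - twos (rem u v)) u) := by
  have hu : rem u v ++ lcs u v = u := rem_append_lcs u v
  have hv : rem v u ++ lcs u v = v := lcs_comm v u ▸ rem_append_lcs v u
  generalize hw : lcs u v = w at *
  generalize rem u v = a at *
  generalize rem v u = b at *
  subst hu hv
  have hab : b.length ≤ a.length := by simpa using hvu
  have hk : b.length - twos a ≤ a.count .one := by have := count_one_add_twos a; omega
  obtain ⟨c, r, rfl, hc, hrepl⟩ := exists_repl_eq_replicate_append hk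
  rw [repl_append w hk, hrepl]
  refine isJoin_replicate_two hw ?_
  have := count_one_add_twos c
  simp only [twos_append] at hc ⊢
  omega

end YFWord

theorem yf_lub_exists (u v : YFWord) :
    yfLE u (joinWord u v) ∧ yfLE v (joinWord u v) ∧
    ∀ y : YFWord, yfLE u y → yfLE v y → yfLE (joinWord u v) y := by
  show IsJoin u v (joinWord u v)
  by_cases h : v.length ≤ u.length
  · simpa [joinWord, h] using isJoin_repl h
  · simpa [joinWord, h] using (isJoin_repl (le_of_not_ge h)).symm
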